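/- arXiv:1311.4638 — 4 statements merged into one kernel-verified Lean document; each statement's English description precedes it below -/
import Mathlib

section
/- Let m_i > 1 for all i. The intrinsic group G has rank k − 1 if and only if ln m_1 / ln m_j ∈ ℚ for all 2 ≤ j ≤ k. -/
/-!
The group `G` is the kernel of the `ℤ`-linear map `g ↦ ∑ gᵢ log mᵢ` from `ℤᵏ` to `ℝ`, so by
rank–nullity its rank is `k` minus the rank of the subgroup of `ℝ` generated by the `log mᵢ`.
That subgroup has rank exactly one when all `log mᵢ` are rational multiples of `log m₁`: it then
lies in the image of `ℚ`, which has `ℤ`-rank one, while two incommensurable logarithms would be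
`ℤ`-linearly independent.
-/

open Module

universe u in
theorem LinearMap.finrank_range_add_finrank_ker_of_hasRankNullity {R N : Type*} {M : Type u}
    [Ring R] [StrongRankCondition R] [HasRankNullity.{u} R] [AddCommGroup M] [Module R M]
    [Module.Finite R M] [AddCommGroup N] [Module R N] (f : M →ₗ[R] N) :
    finrank R (LinearMap.range f) + finrank R (LinearMap.ker f) = finrank R M := by
  rw [← f.quotKerEquivRange.finrank_eq]
  exact Submodule.finrank_quotient_add_finrank _

theorem Fintype.apply_mem_range_linearCombination {ι : Type*} [Fintype ι] (R : Type*)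
    {M : Type*} [Semiring R] [AddCommMonoid M] [Module R M] (v : ι → M) (i : ι) :
    v i ∈ LinearMap.range (Fintype.linearCombination R v) := by
  rw [Fintype.range_linearCombination]
  exact Submodule.subset_span (Set.mem_range_self i)

theorem rank_int_rat : Module.rank ℤ ℚ = 1 := by
  rw [← IsFractionRing.rank_right_eq ℤ ℚ ℚ, Module.rank_self]

theorem Real.prod_zpow_eq_one_iff_sum_zsmul_log_eq_zero {ι : Type*} [Fintype ι] {x : ι → ℝ}
    (hx : ∀ i, 0 < x i) (g : ι → ℤ) : ∏ i, x i ^ g i = 1 ↔ ∑ i, g i • Real.log (x i) = 0 := by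
  have hprod : 0 < ∏ i, x i ^ g i := Finset.prod_pos fun i _ => zpow_pos (hx i) _
  rw [← Real.log_injOn_pos.eq_iff hprod (Set.mem_Ioi.mpr one_pos), Real.log_one,
    Real.log_prod fun i _ => (zpow_pos (hx i) _).ne']
  simp only [Real.log_zpow, zsmul_eq_mul]

section LinearCombination

variable {ι K : Type*} [Fintype ι] [Field K] [CharZero K] {x : ι → K}

theorem finrank_range_linearCombination_rat_smul_le_one (r : ι → ℚ) (y : K) :
    finrank ℤ (LinearMap.range (Fintype.linearCombination ℤ fun i => r i • y)) ≤ 1 := by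
  let ψ : ℚ →ₗ[ℤ] K := (LinearMap.toSpanSingleton ℚ K y).restrictScalars ℤ
  have hfactor : Fintype.linearCombination ℤ (fun i => r i • y) =
      ψ ∘ₗ Fintype.linearCombination ℤ r := by
    ext g
    simp only [ψ, LinearMap.comp_apply, Fintype.linearCombination_apply, map_sum,
      LinearMap.restrictScalars_apply, LinearMap.toSpanSingleton_apply, map_zsmul]
  have hrank : LinearMap.rank (Fintype.linearCombination ℤ fun i => r i • y) ≤ 1 := by
    rw [hfactor, ← Cardinal.lift_le_one_iff.{_, 0}]
    refine (LinearMap.lift_rank_comp_le_right _ _).trans (Cardinal.lift_le_one_iff.mpr ?_)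
    exact rank_int_rat ▸ LinearMap.rank_le_range _
  rw [LinearMap.rank, ← Module.finrank_eq_rank] at hrank
  exact_mod_cast hrank

theorem finrank_range_linearCombination_pos {i : ι} (hi : x i ≠ 0) :
    0 < finrank ℤ (LinearMap.range (Fintype.linearCombination ℤ x)) :=
  Module.finrank_pos_iff_exists_ne_zero.mpr
    ⟨⟨x i, Fintype.apply_mem_range_linearCombination ℤ x i⟩, by simpa using hi⟩

theorem exists_rat_div_eq_of_finrank_range_linearCombination_le_one
    (hx : finrank ℤ (LinearMap.range (Fintype.linearCombination ℤ x)) ≤ 1) (i : ι) {j : ι}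
    (hj : x j ≠ 0) : ∃ q : ℚ, x i / x j = q := by
  by_contra hirr
  have mem := Fintype.apply_mem_range_linearCombination ℤ x
  have hind : LinearIndependent ℤ ![(⟨x i, mem i⟩ : LinearMap.range _), ⟨x j, mem j⟩] := by
    refine LinearIndependent.pair_iff.mpr fun s t hst => ?_
    have hst' : (s : K) * x i + t * x j = 0 := by simpa [Subtype.ext_iff] using hst
    have hs : s = 0 := by
      by_contra hs
      refine hirr ⟨-t / s, ?_⟩
      push_cast
      field_simp
      linear_combination hst'
    subst hs
    simpa [hj] using hst'
  simpa using hind.fintype_card_le_finrank.trans hx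

theorem finrank_range_linearCombination_eq_one_iff (hx : ∀ i, x i ≠ 0) (i₀ : ι) :
    finrank ℤ (LinearMap.range (Fintype.linearCombination ℤ x)) = 1 ↔
      ∀ j, ∃ q : ℚ, x i₀ / x j = q := by
  refine ⟨fun h j => exists_rat_div_eq_of_finrank_range_linearCombination_le_one h.le i₀ (hx j),
    fun h => ?_⟩
  choose q hq using h
  have hx_eq : x = fun j => (q j)⁻¹ • x i₀ := by
    ext j
    rw [Rat.smul_def, Rat.cast_inv, ← hq j, inv_div, div_mul_cancel₀ _ (hx i₀)]
  refine le_antisymm ?_ (finrank_range_linearCombination_pos (hx i₀))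
  rw [hx_eq]
  exact finrank_range_linearCombination_rat_smul_le_one _ _

theorem finrank_ker_linearCombination_eq_card_sub_one_iff (hx : ∀ i, x i ≠ 0) (i₀ : ι) :
    finrank ℤ (LinearMap.ker (Fintype.linearCombination ℤ x)) = Fintype.card ι - 1 ↔
      ∀ j, ∃ q : ℚ, x i₀ / x j = q := by
  have hrank := (Fintype.linearCombination ℤ x).finrank_range_add_finrank_ker_of_hasRankNullity
  have hpos := finrank_range_linearCombination_pos (hx i₀)
  rw [Module.finrank_fintype_fun_eq_card] at hrank
  rw [← finrank_range_linearCombination_eq_one_iff hx i₀]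
  omega

end LinearCombination

/-- The intrinsic group has rank `k - 1` iff `ln m_1 / ln m_j ∈ ℚ` for all `j`. -/
theorem intrinsic_group_rank_eq_iff (k : ℕ) (hk : 0 < k) (m : Fin k → ℕ)
    (hm : ∀ i, 1 < m i) (G : AddSubgroup (Fin k → ℤ))
    (hG : ∀ g : Fin k → ℤ, g ∈ G ↔ ∏ i, ((m i : ℚ)) ^ (g i) = 1) :
    Module.finrank ℤ (AddSubgroup.toIntSubmodule G) = k - 1 ↔
      ∀ j : Fin k, ∃ q : ℚ,
        Real.log (m ⟨0, hk⟩) / Real.log (m j) = (q : ℝ) := by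
  have hm_pos : ∀ i, (0 : ℝ) < m i := fun i => Nat.cast_pos.mpr (Nat.zero_lt_of_lt (hm i))
  have hlog : ∀ i, Real.log (m i) ≠ 0 := fun i => (Real.log_pos (by exact_mod_cast hm i)).ne'
  have hker : AddSubgroup.toIntSubmodule G =
      LinearMap.ker (Fintype.linearCombination ℤ fun i => Real.log (m i)) := by
    ext g
    change g ∈ G ↔ _
    rw [hG, LinearMap.mem_ker, Fintype.linearCombination_apply,
      ← Real.prod_zpow_eq_one_iff_sum_zsmul_log_eq_zero hm_pos,
      ← (Rat.cast_injective (α := ℝ)).eq_iff]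
    push_cast
    rfl
  rw [hker, ← finrank_ker_linearCombination_eq_card_sub_one_iff hlog, Fintype.card_fin]
end

section
/- If m_1, m_2 > 1 are integers with ln m_1 / ln m_2 irrational, then the set {m_1^{n_1} m_2^{n_2} : n_1, n_2 ∈ ℤ} is dense in (0, ∞), and hence its closure in [0, ∞) is all of [0, ∞). -/
/-!
Taking logarithms, `m₁ ^ n₁ * m₂ ^ n₂ = exp (n₁ log m₁ + n₂ log m₂)`, so the set is the image under
`exp` of the additive subgroup `ℤ log m₁ + ℤ log m₂` of `ℝ`. That subgroup is dense exactly when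
`log m₁ / log m₂` is irrational (it is cyclic otherwise), and `exp` maps dense subsets of `ℝ` onto
dense subsets of `(0, ∞)`. The closure then also contains `0`, and no negative number.
-/

open Set Real

theorem Real.exp_zsmul_log {x : ℝ} (hx : 0 < x) (n : ℤ) : exp (n • log x) = x ^ n := by
  rw [zsmul_eq_mul, mul_comm, ← rpow_def_of_pos hx, rpow_intCast]

theorem Real.exp_image_addSubgroupClosure_log_pair {x y : ℝ} (hx : 0 < x) (hy : 0 < y) :
    exp '' (AddSubgroup.closure {log x, log y} : Set ℝ) =
      {z | ∃ n₁ n₂ : ℤ, z = x ^ n₁ * y ^ n₂} := by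
  ext z
  simp only [mem_image, SetLike.mem_coe, AddSubgroup.mem_closure_pair, mem_ofPred_eq]
  constructor
  · rintro ⟨_, ⟨n₁, n₂, rfl⟩, rfl⟩
    exact ⟨n₁, n₂, by rw [exp_add, exp_zsmul_log hx, exp_zsmul_log hy]⟩
  · rintro ⟨n₁, n₂, rfl⟩
    exact ⟨_, ⟨n₁, n₂, rfl⟩, by rw [exp_add, exp_zsmul_log hx, exp_zsmul_log hy]⟩

theorem Dense.Ioi_zero_subset_closure_exp_image {S : Set ℝ} (hS : Dense S) :
    Ioi 0 ⊆ closure (exp '' S) := fun x hx =>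
  image_closure_subset_closure_image continuous_exp ⟨log x, hS _, exp_log hx⟩

theorem closure_eq_Ici_zero_of_Ioi_subset_closure {T : Set ℝ} (hT : T ⊆ Ici 0)
    (hdense : Ioi 0 ⊆ closure T) : closure T = Ici 0 :=
  (closure_minimal hT isClosed_Ici).antisymm <| by
    simpa only [closure_Ioi, closure_closure] using closure_mono hdense

/-- If `ln m₁ / ln m₂` is irrational then `{m₁^{n₁} m₂^{n₂} : n₁, n₂ ∈ ℤ}` is
dense in `(0, ∞)`, and its closure in `ℝ` is `[0, ∞)`. -/
theorem dense_powers_of_irrational_log_ratio (m₁ m₂ : ℕ) (h₁ : 1 < m₁) (h₂ : 1 < m₂)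
    (hirr : Irrational (Real.log m₁ / Real.log m₂)) :
    (∀ x ∈ Set.Ioi (0 : ℝ),
        x ∈ closure {x : ℝ | ∃ n₁ n₂ : ℤ, x = (m₁ : ℝ) ^ n₁ * (m₂ : ℝ) ^ n₂}) ∧
    closure {x : ℝ | ∃ n₁ n₂ : ℤ, x = (m₁ : ℝ) ^ n₁ * (m₂ : ℝ) ^ n₂} =
      Set.Ici (0 : ℝ) := by
  have hm₁ : (0 : ℝ) < m₁ := by exact_mod_cast h₁.pos
  have hm₂ : (0 : ℝ) < m₂ := by exact_mod_cast h₂.pos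
  have hdense : Ioi 0 ⊆ closure {x : ℝ | ∃ n₁ n₂ : ℤ, x = (m₁ : ℝ) ^ n₁ * (m₂ : ℝ) ^ n₂} := by
    rw [← exp_image_addSubgroupClosure_log_pair hm₁ hm₂]
    exact (dense_addSubgroupClosure_pair_iff.2 hirr).Ioi_zero_subset_closure_exp_image
  refine ⟨hdense, closure_eq_Ici_zero_of_Ioi_subset_closure ?_ hdense⟩
  rintro _ ⟨n₁, n₂, rfl⟩
  exact mem_Ici.2 (by positivity)
end

section
/- Let V = (V_1, …, V_n) be a Cuntz-type tuple in a unital C*-algebra A, and let α(a) = (1/(2^n · n!)) ∑_{f, ς} U_{(f,ς)} a U_{(f,ς)}*, where the sum is over all functions f : {1,…,n} → {0,1} and permutations ς of {1,…,n}, with U_{(f,ς)} = ∑_i (−1)^{f(i)} V_{ς(i)} V_i*. Then for all indices i, j: α(V_i V_j*) = (δ_{ij}/n) · 1. -/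
/-!
Since `U_{(f,ς)} V_k = (-1)^{f k} V_{ς k}`, conjugation by `U_{(f,ς)}` sends `V_i V_j*` to
`(-1)^{f i + f j} V_{ς i} V_{ς j}*`. Averaging the signs over `f` kills the terms with `i ≠ j`,
and averaging over `ς` spreads `V_i V_i*` evenly over the `V_k V_k*`, which sum to `1`.
-/

variable {A : Type*} [NormedRing A] [StarRing A] [CStarRing A] [NormedAlgebra ℂ A]
  [CompleteSpace A] [StarModule ℂ A]

/-- The sign-permutation unitary `U_{(f,ς)} = ∑_i (-1)^{f(i)} V_{ς(i)} V_i*`. -/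
def signPermUnitary {n : ℕ} (V : Fin n → A) (f : Fin n → Fin 2)
    (ς : Equiv.Perm (Fin n)) : A :=
  ∑ i, ((-1 : ℂ) ^ (f i : ℕ)) • (V (ς i) * star (V i))

/-- The averaging operator over all sign-permutation unitaries of a Cuntz-type
tuple `V`. -/
noncomputable def signPermAverage {n : ℕ} (V : Fin n → A) (a : A) : A :=
  ((1 : ℂ) / (2 ^ n * (n.factorial : ℂ))) •
    ∑ f : Fin n → Fin 2, ∑ ς : Equiv.Perm (Fin n),
      signPermUnitary V f ς * a * star (signPermUnitary V f ς)

theorem neg_one_pow_val_add_one {R : Type*} [Monoid R] [HasDistribNeg R] (x : Fin 2) :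
    (-1 : R) ^ ((x + 1 : Fin 2) : ℕ) = -(-1) ^ (x : ℕ) := by
  fin_cases x <;> simp

theorem sum_neg_one_pow_add_val {n : ℕ} (i j : Fin n) :
    ∑ f : Fin n → Fin 2, (-1 : ℂ) ^ ((f i : ℕ) + f j) = if i = j then 2 ^ n else 0 := by
  split_ifs with hij
  · subst hij
    simp [← two_mul, pow_mul]
  · -- flipping the `i`-th coordinate changes the sign of every summand
    have hflip : ∑ f : Fin n → Fin 2, (-1 : ℂ) ^ ((f i : ℕ) + f j) =
        -∑ f : Fin n → Fin 2, (-1 : ℂ) ^ ((f i : ℕ) + f j) := by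
      conv_lhs => rw [← Equiv.sum_comp (Equiv.addRight (Pi.single i 1 : Fin n → Fin 2))]
      simp [Ne.symm hij, pow_add, neg_one_pow_val_add_one]
    linear_combination hflip / 2

theorem card_smul_sum_perm_apply {α M : Type*} [Fintype α] [DecidableEq α] [AddCommMonoid M]
    (g : α → M) (a : α) :
    Fintype.card α • ∑ ς : Equiv.Perm α, g (ς a) = (Fintype.card α).factorial • ∑ k, g k := by
  have hindep : ∀ b, ∑ ς : Equiv.Perm α, g (ς a) = ∑ ς : Equiv.Perm α, g (ς b) := fun b =>
    (Equiv.sum_comp (Equiv.mulRight (Equiv.swap b a)) _).symm.trans (by simp)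
  calc Fintype.card α • ∑ ς : Equiv.Perm α, g (ς a)
      = ∑ b : α, ∑ ς : Equiv.Perm α, g (ς b) := by simp [← hindep]
    _ = ∑ ς : Equiv.Perm α, ∑ b, g (ς b) := Finset.sum_comm
    _ = (Fintype.card α).factorial • ∑ k, g k := by
        simp [Equiv.sum_comp, Fintype.card_perm]

section Cuntz

variable {A : Type*} [NormedRing A] [StarRing A] [NormedAlgebra ℂ A] {n : ℕ} {V : Fin n → A}

theorem signPermUnitary_mul_eq_smul (hiso : ∀ i j, star (V i) * V j = if i = j then 1 else 0)
    (f : Fin n → Fin 2) (ς : Equiv.Perm (Fin n)) (k : Fin n) :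
    signPermUnitary V f ς * V k = ((-1 : ℂ) ^ (f k : ℕ)) • V (ς k) := by
  simp [signPermUnitary, Finset.sum_mul, mul_assoc, hiso]

theorem signPermUnitary_conj_mul_star [StarModule ℂ A]
    (hiso : ∀ i j, star (V i) * V j = if i = j then 1 else 0)
    (f : Fin n → Fin 2) (ς : Equiv.Perm (Fin n)) (i j : Fin n) :
    signPermUnitary V f ς * (V i * star (V j)) * star (signPermUnitary V f ς) =
      ((-1 : ℂ) ^ ((f i : ℕ) + f j)) • (V (ς i) * star (V (ς j))) := by
  rw [← mul_assoc, mul_assoc, ← star_mul, signPermUnitary_mul_eq_smul hiso,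
    signPermUnitary_mul_eq_smul hiso, star_smul, smul_mul_smul_comm, pow_add]
  simp

theorem sum_perm_mul_star_eq_smul_one (hsum : ∑ i, V i * star (V i) = 1) (i : Fin n) :
    ∑ ς : Equiv.Perm (Fin n), V (ς i) * star (V (ς i)) = ((n.factorial : ℂ) / n) • 1 := by
  have hn : (n : ℂ) ≠ 0 := Nat.cast_ne_zero.mpr i.pos.ne'
  have hcount := card_smul_sum_perm_apply (fun k => V k * star (V k)) i
  rw [Fintype.card_fin, hsum, ← Nat.cast_smul_eq_nsmul ℂ, ← Nat.cast_smul_eq_nsmul ℂ] at hcount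
  rw [div_eq_inv_mul, mul_smul, ← hcount, inv_smul_smul₀ hn]

end Cuntz

theorem signPermAverage_apply_Vi_Vj_star_general {n : ℕ} (V : Fin n → A)
    (hiso : ∀ i j, star (V i) * V j = if i = j then 1 else 0)
    (hsum : ∑ i, V i * star (V i) = 1) (i j : Fin n) :
    signPermAverage V (V i * star (V j)) =
      (if i = j then ((1 : ℂ) / n) else 0) • (1 : A) := by
  simp only [signPermAverage, signPermUnitary_conj_mul_star hiso]
  rw [Finset.sum_comm]
  simp only [← Finset.sum_smul, sum_neg_one_pow_add_val]
  split_ifs with hij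
  · subst hij
    have hn : (n : ℂ) ≠ 0 := Nat.cast_ne_zero.mpr i.pos.ne'
    have hfac : (n.factorial : ℂ) ≠ 0 := Nat.cast_ne_zero.mpr n.factorial_ne_zero
    rw [← Finset.smul_sum, sum_perm_mul_star_eq_smul_one hsum, smul_smul, smul_smul]
    congr 1
    field_simp
  · simp

/-- For a Cuntz-type tuple, `α(V_i V_j*) = (δ_{ij} / n) · 1`. -/
theorem signPermAverage_apply_Vi_Vj_star {n : ℕ} (hn : 0 < n) (V : Fin n → A)
    (hiso : ∀ i j, star (V i) * V j = if i = j then 1 else 0)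
    (hsum : ∑ i, V i * star (V i) = 1) (i j : Fin n) :
    signPermAverage V (V i * star (V j)) =
      (if i = j then ((1 : ℂ) / n) else 0) • (1 : A) :=
  signPermAverage_apply_Vi_Vj_star_general V hiso hsum i j
end

section
/- Let V = (V_1, …, V_n) be a Cuntz-type tuple in a unital C*-algebra A and α the averaging operator over sign-permutation unitaries U_{(f,ς)} as above. Then for words u = u_1 u_2 and v = v_1 v_2 in the free semigroup on n letters with |u_1| = |v_1| = 1 (single letters), α(V_u V_v*) = (δ_{u_1, v_1}/n) γ_1(V_{u_2}) γ_1(V_{v_2})*, where γ_1(a) = ∑_i V_i a V_i*. -/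
variable {A : Type*} [NormedRing A] [StarRing A] [CStarRing A] [NormedAlgebra ℂ A]
  [CompleteSpace A] [StarModule ℂ A]

/-- The product `V_w` associated to a word `w` over `{1,…,n}`. -/
def wordProd {n : ℕ} (V : Fin n → A) (w : List (Fin n)) : A :=
  (w.map V).prod

/-- The endomorphism `γ₁(a) = ∑_i V_i a V_i*`. -/
def gammaOne {n : ℕ} (V : Fin n → A) (a : A) : A :=
  ∑ i, V i * a * star (V i)

section Aux
variable {n : ℕ} {V : Fin n → A}

lemma spuMulCuntz (hiso : ∀ i j, star (V i) * V j = if i = j then 1 else 0)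
    (f : Fin n → Fin 2) (ς : Equiv.Perm (Fin n)) (u : Fin n) :
    signPermUnitary V f ς * V u = ((-1 : ℂ) ^ (f u : ℕ)) • V (ς u) := by
  unfold signPermUnitary
  rw [Finset.sum_mul, Finset.sum_eq_single u]
  · rw [smul_mul_assoc, mul_assoc, hiso, if_pos rfl, mul_one]
  · intro i _ hi
    rw [smul_mul_assoc, mul_assoc, hiso, if_neg hi, mul_zero, smul_zero]
  · intro h; exact absurd (Finset.mem_univ u) h

lemma mulStarSpuCuntz (hiso : ∀ i j, star (V i) * V j = if i = j then 1 else 0)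
    (f : Fin n → Fin 2) (ς : Equiv.Perm (Fin n)) (v : Fin n) :
    star (V v) * star (signPermUnitary V f ς)
      = ((-1 : ℂ) ^ (f v : ℕ)) • star (V (ς v)) := by
  rw [← star_mul, spuMulCuntz hiso, star_smul]
  congr 1
  simp

lemma conjSpuCuntz (hiso : ∀ i j, star (V i) * V j = if i = j then 1 else 0)
    (f : Fin n → Fin 2) (ς : Equiv.Perm (Fin n)) (u₁ v₁ : Fin n) (X Y : A) :
    signPermUnitary V f ς * (V u₁ * X * star (V v₁ * Y)) * star (signPermUnitary V f ς)
      = ((-1 : ℂ) ^ (f u₁ : ℕ) * (-1 : ℂ) ^ (f v₁ : ℕ)) •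
        (V (ς u₁) * X * star (V (ς v₁) * Y)) := by
  have h1 := spuMulCuntz hiso f ς u₁
  have h2 := mulStarSpuCuntz hiso f ς v₁
  calc signPermUnitary V f ς * (V u₁ * X * star (V v₁ * Y)) * star (signPermUnitary V f ς)
      = (signPermUnitary V f ς * V u₁) * (X * star Y) *
          (star (V v₁) * star (signPermUnitary V f ς)) := by
        simp only [star_mul, mul_assoc]
    _ = (((-1 : ℂ) ^ (f u₁ : ℕ)) • V (ς u₁)) * (X * star Y) *
          (((-1 : ℂ) ^ (f v₁ : ℕ)) • star (V (ς v₁))) := by rw [h1, h2]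
    _ = ((-1 : ℂ) ^ (f u₁ : ℕ) * (-1 : ℂ) ^ (f v₁ : ℕ)) •
          (V (ς u₁) * X * star (V (ς v₁) * Y)) := by
        simp only [star_mul, smul_mul_assoc, mul_smul_comm, smul_smul, mul_assoc]
        rw [mul_comm ((-1 : ℂ) ^ (f v₁ : ℕ))]

lemma signSumCuntz (n : ℕ) (u v : Fin n) :
    ∑ f : Fin n → Fin 2, ((-1 : ℂ) ^ (f u : ℕ) * (-1 : ℂ) ^ (f v : ℕ))
      = if u = v then (2 : ℂ) ^ n else 0 := by
  have key : ∀ f : Fin n → Fin 2, (-1 : ℂ) ^ (f u : ℕ) * (-1 : ℂ) ^ (f v : ℕ)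
      = ∏ i, ((if i = u then (-1 : ℂ) ^ (f i : ℕ) else 1) *
          (if i = v then (-1 : ℂ) ^ (f i : ℕ) else 1)) := by
    intro f
    rw [Finset.prod_mul_distrib, Finset.prod_ite_eq', Finset.prod_ite_eq']
    simp
  simp only [key]
  rw [← Fintype.prod_sum (fun (i : Fin n) (x : Fin 2) =>
      (if i = u then (-1 : ℂ) ^ (x : ℕ) else 1) * (if i = v then (-1 : ℂ) ^ (x : ℕ) else 1))]
  by_cases huv : u = v
  · subst huv
    rw [if_pos rfl]
    have : ∀ i : Fin n, (∑ x : Fin 2, ((if i = u then (-1 : ℂ) ^ (x : ℕ) else 1) *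
        (if i = u then (-1 : ℂ) ^ (x : ℕ) else 1))) = 2 := by
      intro i
      by_cases h : i = u <;> simp [h, Fin.sum_univ_two] <;> norm_num
    rw [Finset.prod_congr rfl fun i _ => this i, Finset.prod_const, Finset.card_univ,
      Fintype.card_fin]
  · rw [if_neg huv]
    apply Finset.prod_eq_zero (Finset.mem_univ u)
    simp [Fin.sum_univ_two, huv]

lemma permSumSmulCuntz (u : Fin n) (g : Fin n → A) :
    (n : ℂ) • ∑ ς : Equiv.Perm (Fin n), g (ς u) = ((n.factorial : ℕ) : ℂ) • ∑ k, g k := by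
  have h1 : ∀ j : Fin n, ∑ ς : Equiv.Perm (Fin n), g (ς j) = ∑ ς : Equiv.Perm (Fin n), g (ς u) := by
    intro j
    refine Fintype.sum_bijective (fun ς => ς * Equiv.swap u j)
      (Group.mulRight_bijective _) _ _ ?_
    intro ς
    simp [Equiv.Perm.mul_apply]
  have h2 : ∑ j : Fin n, ∑ ς : Equiv.Perm (Fin n), g (ς j)
      = n • ∑ ς : Equiv.Perm (Fin n), g (ς u) := by
    rw [Finset.sum_congr rfl fun j _ => h1 j, Finset.sum_const, Finset.card_univ,
      Fintype.card_fin]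
  have h3 : ∑ j : Fin n, ∑ ς : Equiv.Perm (Fin n), g (ς j) = n.factorial • ∑ k, g k := by
    rw [Finset.sum_comm, Finset.sum_congr rfl fun ς _ => Equiv.sum_comp ς g,
      Finset.sum_const, Finset.card_univ, Fintype.card_perm, Fintype.card_fin]
  rw [Nat.cast_smul_eq_nsmul, Nat.cast_smul_eq_nsmul, ← h2, h3]

lemma gammaMulCuntz (hiso : ∀ i j, star (V i) * V j = if i = j then 1 else 0)
    (X Y : A) :
    gammaOne V X * star (gammaOne V Y) = ∑ k, V k * (X * (star Y * star (V k))) := by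
  have key : ∀ i j (b : A), star (V i) * (V j * b) = if i = j then b else 0 := by
    intro i j b; rw [← mul_assoc, hiso]; split <;> simp
  unfold gammaOne
  rw [star_sum, Finset.sum_mul_sum]
  refine Finset.sum_congr rfl fun i _ => ?_
  rw [Finset.sum_eq_single i]
  · simp only [star_mul, star_star, mul_assoc, key, if_pos]
  · intro j _ hj
    simp only [star_mul, star_star, mul_assoc, key]
    rw [if_neg (Ne.symm hj)]
    simp
  · intro h; exact absurd (Finset.mem_univ i) h

end Aux

/-- For words `u = u₁u₂`, `v = v₁v₂` with `|u₁| = |v₁| = 1`,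
`α(V_u V_v*) = (δ_{u₁,v₁}/n) γ₁(V_{u₂}) γ₁(V_{v₂})*`. -/
theorem signPermAverage_word (n : ℕ) (hn : 0 < n) (V : Fin n → A)
    (hiso : ∀ i j, star (V i) * V j = if i = j then 1 else 0)
    (hsum : ∑ i, V i * star (V i) = 1)
    (u₁ v₁ : Fin n) (u₂ v₂ : List (Fin n)) :
    signPermAverage V (V u₁ * wordProd V u₂ * star (V v₁ * wordProd V v₂)) =
      (if u₁ = v₁ then ((1 : ℂ) / n) else 0) •
        (gammaOne V (wordProd V u₂) * star (gammaOne V (wordProd V v₂))) := by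
  set X := wordProd V u₂ with hX
  set Y := wordProd V v₂ with hY
  have hnC : (n : ℂ) ≠ 0 := Nat.cast_ne_zero.mpr hn.ne'
  have hfC : ((n.factorial : ℕ) : ℂ) ≠ 0 := Nat.cast_ne_zero.mpr n.factorial_ne_zero
  have h2C : (2 : ℂ) ^ n ≠ 0 := pow_ne_zero _ two_ne_zero
  unfold signPermAverage
  simp only [conjSpuCuntz hiso]
  have step : (∑ f : Fin n → Fin 2, ∑ ς : Equiv.Perm (Fin n),
        ((-1 : ℂ) ^ ((f u₁ : ℕ)) * (-1 : ℂ) ^ ((f v₁ : ℕ))) •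
          (V (ς u₁) * X * star (V (ς v₁) * Y)))
      = (∑ f : Fin n → Fin 2, ((-1 : ℂ) ^ ((f u₁ : ℕ)) * (-1 : ℂ) ^ ((f v₁ : ℕ)))) •
          ∑ ς : Equiv.Perm (Fin n), (V (ς u₁) * X * star (V (ς v₁) * Y)) := by
    rw [Finset.sum_smul]
    exact Finset.sum_congr rfl fun f _ => (Finset.smul_sum).symm
  rw [step, signSumCuntz]
  by_cases huv : u₁ = v₁
  · subst huv
    rw [if_pos rfl, if_pos rfl, smul_smul]
    have hc : (1 : ℂ) / (2 ^ n * (n.factorial : ℂ)) * (2 : ℂ) ^ n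
        = 1 / ((n.factorial : ℕ) : ℂ) := by
      field_simp
    rw [hc]
    set g : Fin n → A := fun k => V k * X * star (V k * Y) with hg
    have hperm := permSumSmulCuntz (A := A) (n := n) u₁ g
    have hT : (∑ ς : Equiv.Perm (Fin n), (V (ς u₁) * X * star (V (ς u₁) * Y)))
        = ∑ ς : Equiv.Perm (Fin n), g (ς u₁) := rfl
    rw [hT]
    have hgam : gammaOne V X * star (gammaOne V Y) = ∑ k, g k := by
      rw [gammaMulCuntz hiso]
      refine Finset.sum_congr rfl fun k _ => ?_
      simp [hg, star_mul, mul_assoc]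
    rw [hgam]
    calc (1 / ((n.factorial : ℕ) : ℂ)) • ∑ ς : Equiv.Perm (Fin n), g (ς u₁)
        = (1 / ((n.factorial : ℕ) : ℂ) * (1 / (n : ℂ))) •
            ((n : ℂ) • ∑ ς : Equiv.Perm (Fin n), g (ς u₁)) := by
          rw [smul_smul]
          congr 1
          field_simp
      _ = (1 / ((n.factorial : ℕ) : ℂ) * (1 / (n : ℂ))) •
            (((n.factorial : ℕ) : ℂ) • ∑ k, g k) := by rw [hperm]
      _ = ((1 : ℂ) / n) • ∑ k, g k := by
          rw [smul_smul]
          congr 1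
          field_simp
  · rw [if_neg huv, if_neg huv, zero_smul, smul_zero, zero_smul]
end
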